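/- arXiv:1108.4774 — 2 statements merged into one kernel-verified Lean document; each statement's English description precedes it below -/
import Mathlib

section
/- Let ε_∞ be the multiplicative function with ε_∞(p^n) = p^{⌊n/2⌋} + p^{⌊(n-1)/2⌋} for all primes p and n ≥ 1. Then (μ*μ*ε_∞)(p^n) equals 0 if n is odd, equals p-2 if n=2, and equals p^{n/2-2}(p-1)² if n is even and n≥4. -/
open ArithmeticFunction

private lemma mulpp (f g : ArithmeticFunction ℚ) {p : ℕ} (hp : p.Prime) (n : ℕ) :
    (f * g) (p ^ n) = ∑ k ∈ Finset.range (n + 1), f (p ^ k) * g (p ^ (n - k)) := by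
  rw [ArithmeticFunction.mul_apply, Nat.sum_divisorsAntidiagonal (f · * g ·),
    Nat.divisors_prime_pow hp, Finset.sum_map]
  refine Finset.sum_congr rfl fun k hk => ?_
  simp only [Function.Embedding.coeFn_mk]
  rw [Nat.pow_div (Nat.lt_succ_iff.mp (Finset.mem_range.mp hk)) hp.pos]

private lemma muq {p : ℕ} (hp : p.Prime) (k : ℕ) :
    ((moebius : ArithmeticFunction ℤ) : ArithmeticFunction ℚ) (p ^ k) =
      if k = 0 then 1 else if k = 1 then -1 else 0 := by
  rw [intCoe_apply]
  rcases Nat.eq_zero_or_pos k with h | h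
  · simp [h]
  · rw [moebius_apply_prime_pow hp h.ne']
    rcases eq_or_ne k 1 with h1 | h1 <;> simp [h1, h.ne']

private lemma mumu {p : ℕ} (hp : p.Prime) (k : ℕ) :
    (((moebius : ArithmeticFunction ℤ) : ArithmeticFunction ℚ) *
      ((moebius : ArithmeticFunction ℤ) : ArithmeticFunction ℚ)) (p ^ k) =
      if k = 0 then 1 else if k = 1 then -2 else if k = 2 then 1 else 0 := by
  rw [mulpp _ _ hp]
  match k with
  | 0 => simp [muq hp]
  | 1 =>
    rw [Finset.sum_range_succ, Finset.sum_range_succ, Finset.sum_range_zero]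
    simp [muq hp, moebius_apply_prime hp]
    norm_num
  | 2 =>
    rw [Finset.sum_range_succ, Finset.sum_range_succ, Finset.sum_range_succ,
      Finset.sum_range_zero]
    simp [muq hp, moebius_apply_prime hp, moebius_apply_prime_pow hp]
  | (m + 3) =>
    rw [if_neg (by omega), if_neg (by omega), if_neg (by omega)]
    refine Finset.sum_eq_zero fun i hi => ?_
    have hi' := Finset.mem_range.mp hi
    rw [muq hp, muq hp]
    split_ifs <;> try omega
    all_goals norm_num

/-- Let `ε_∞` be the multiplicative function with `ε_∞(p^n) = p^⌊n/2⌋ + p^⌊(n-1)/2⌋`.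
Then `(μ*μ*ε_∞)(p^n)` equals `0` if `n` is odd, `p-2` if `n = 2`, and
`p^(n/2-2)(p-1)²` if `n` is even and `n ≥ 4`. -/
theorem stmt6 (e : ArithmeticFunction ℚ) (he : e.IsMultiplicative)
    (hval : ∀ p n : ℕ, p.Prime → 1 ≤ n → e (p ^ n) = (p : ℚ) ^ (n / 2) + (p : ℚ) ^ ((n - 1) / 2))
    (p n : ℕ) (hp : p.Prime) (hn : 1 ≤ n) :
    ((ArithmeticFunction.moebius : ArithmeticFunction ℤ) *
        (ArithmeticFunction.moebius : ArithmeticFunction ℤ) * e : ArithmeticFunction ℚ) (p ^ n) =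
      if Odd n then 0
      else if n = 2 then (p : ℚ) - 2
      else (p : ℚ) ^ (n / 2 - 2) * ((p : ℚ) - 1) ^ 2 := by
  rw [mulpp _ _ hp]
  rcases eq_or_lt_of_le hn with h1 | h2
  · -- n = 1
    rw [← h1]
    rw [Finset.sum_range_succ, Finset.sum_range_succ, Finset.sum_range_zero]
    rw [mumu hp, mumu hp]
    simp only [Nat.sub_zero, Nat.sub_self, pow_zero, he.map_one]
    rw [hval p 1 hp le_rfl]
    norm_num
  · -- n ≥ 2
    have hn2 : 2 ≤ n := h2
    have hsum : ∑ k ∈ Finset.range (n + 1),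
        (((moebius : ArithmeticFunction ℤ) : ArithmeticFunction ℚ) *
          ((moebius : ArithmeticFunction ℤ) : ArithmeticFunction ℚ)) (p ^ k) * e (p ^ (n - k)) =
        e (p ^ n) - 2 * e (p ^ (n - 1)) + e (p ^ (n - 2)) := by
      rw [← Finset.sum_subset (Finset.range_subset_range.mpr (by omega : 3 ≤ n + 1))
        (fun k _ hk => by
          rw [mumu hp, if_neg (by simp at hk; omega), if_neg (by simp at hk; omega),
            if_neg (by simp at hk; omega), zero_mul])]
      rw [Finset.sum_range_succ, Finset.sum_range_succ, Finset.sum_range_succ,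
        Finset.sum_range_zero, mumu hp, mumu hp, mumu hp]
      norm_num
      ring
    rw [hsum]
    rcases eq_or_lt_of_le hn2 with h2' | h3
    · -- n = 2
      rw [← h2']
      have ha : e (p ^ 2) = p + 1 := by rw [hval p 2 hp (by norm_num)]; norm_num
      have hb : e (p ^ (2 - 1)) = 2 := by rw [hval p 1 hp le_rfl]; norm_num
      have hc : e (p ^ (2 - 2)) = 1 := by simpa using he.map_one
      rw [ha, hb, hc, if_neg (by decide), if_pos rfl]
      norm_num
      ring
    · -- n ≥ 3
      have hn3 : 3 ≤ n := h3
      have ha := hval p n hp (by omega)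
      have hb := hval p (n - 1) hp (by omega)
      have hc := hval p (n - 2) hp (by omega)
      rw [ha, hb, hc]
      rcases Nat.even_or_odd n with ⟨m, hm⟩ | ⟨m, hm⟩
      · -- even, n = 2m, m ≥ 2
        have hm2 : 2 ≤ m := by omega
        rw [if_neg (by rw [Nat.odd_iff]; omega), if_neg (by omega)]
        have d1 : n / 2 = m := by omega
        have d2 : (n - 1) / 2 = m - 1 := by omega
        have d3 : (n - 1) / 2 = m - 1 := by omega
        have d4 : (n - 1 - 1) / 2 = m - 1 := by omega
        have d5 : (n - 2) / 2 = m - 1 := by omega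
        have d6 : (n - 2 - 1) / 2 = m - 2 := by omega
        have d7 : n / 2 - 2 = m - 2 := by omega
        rw [d1, d2, d4, d5, d6]
        have p1 : (p:ℚ) ^ m = (p:ℚ) ^ (m - 2) * p ^ 2 := by rw [← pow_add]; congr 1; omega
        have p2 : (p:ℚ) ^ (m - 1) = (p:ℚ) ^ (m - 2) * p := by
          rw [← pow_succ]; congr 1; omega
        rw [p1, p2]
        ring
      · -- odd, n = 2m+1, m ≥ 1
        have hm1 : 1 ≤ m := by omega
        rw [if_pos ⟨m, hm⟩]
        have d1 : n / 2 = m := by omega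
        have d2 : (n - 1) / 2 = m := by omega
        have d3 : (n - 1 - 1) / 2 = m - 1 := by omega
        have d4 : (n - 2) / 2 = m - 1 := by omega
        have d5 : (n - 2 - 1) / 2 = m - 1 := by omega
        rw [d1, d2, d3, d4, d5]
        ring
end

section
/- For k even and ζ = (3 + √−3)/2, η = (3 − √−3)/2 (roots of X² - 3X + 3 = 0), the quantity a_{3,3,k} = (ζ^{k-1} - η^{k-1})/(ζ - η) equals (-3)^{k/2 - 1}·B_k, where B_k = 1 if k ≡ 0 or 2 mod 6 and B_k = -2 if k ≡ 4 mod 6. -/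
lemma aux19 (t : ℂ) (ht : t ^ 2 = -3) (n : ℕ) :
    ((3 + t) / 2) ^ (2 * n + 1) - ((3 - t) / 2) ^ (2 * n + 1)
      = (-3 : ℂ) ^ n * (if n % 3 = 1 then -2 else 1) * t := by
  induction n using Nat.strong_induction_on with
  | _ n ih =>
    have hz6 : ((3 + t) / 2) ^ 6 = -27 := by
      linear_combination ((t^4 + 18*t^3 + 132*t^2 + 486*t + 819)/64) * ht
    have hn6 : ((3 - t) / 2) ^ 6 = -27 := by
      linear_combination ((t^4 - 18*t^3 + 132*t^2 - 486*t + 819)/64) * ht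
    rcases n with _ | _ | _ | m
    · norm_num; ring
    · norm_num
      linear_combination (t / 4) * ht
    · norm_num
      linear_combination (t * (t^2 + 87) / 16) * ht
    · rw [show 2 * (m + 1 + 1 + 1) + 1 = (2 * m + 1) + 6 from by ring,
        show (m + 1 + 1 + 1) % 3 = m % 3 from by omega,
        pow_add ((3 + t) / 2) (2 * m + 1) 6, pow_add ((3 - t) / 2) (2 * m + 1) 6, hz6, hn6,
        show (-3 : ℂ) ^ (m + 1 + 1 + 1) = (-3) ^ m * (-27) from by ring]
      have := ih m (by omega)
      linear_combination (-27 : ℂ) * this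

/-- For `k` even positive and `ζ = (3 + √−3)/2`, `η = (3 − √−3)/2` the roots of
`X² - 3X + 3 = 0`, `a_{3,3,k} = (ζ^{k-1} - η^{k-1})/(ζ - η) = (-3)^{k/2-1}·B_k`, where
`B_k = 1` if `k ≡ 0, 2 mod 6` and `B_k = -2` if `k ≡ 4 mod 6`. -/
theorem stmt19 (k : ℕ) (hk : Even k) (hk0 : 0 < k) :
    (((3 + Complex.I * Real.sqrt 3) / 2) ^ (k - 1) -
          ((3 - Complex.I * Real.sqrt 3) / 2) ^ (k - 1)) /
        ((3 + Complex.I * Real.sqrt 3) / 2 - (3 - Complex.I * Real.sqrt 3) / 2) =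
      (-3 : ℂ) ^ (k / 2 - 1) * (if k % 6 = 0 ∨ k % 6 = 2 then 1 else -2) := by
  set t : ℂ := Complex.I * Real.sqrt 3 with htdef
  have hs : ((Real.sqrt 3 : ℝ) : ℂ) ^ 2 = 3 := by
    rw [← Complex.ofReal_pow, Real.sq_sqrt (by norm_num : (3:ℝ) ≥ 0)]
    norm_num
  have ht : t ^ 2 = -3 := by
    rw [htdef, mul_pow, Complex.I_sq, hs]; ring
  have ht0 : t ≠ 0 := by
    intro h
    rw [h] at ht
    norm_num at ht
  obtain ⟨m, hm⟩ := hk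
  have hm1 : 1 ≤ m := by omega
  set n := m - 1 with hn
  have hk2 : k = 2 * n + 2 := by omega
  have hexp : k - 1 = 2 * n + 1 := by omega
  have hdiv : k / 2 - 1 = n := by omega
  have hif : (if k % 6 = 0 ∨ k % 6 = 2 then (1 : ℂ) else -2)
      = (if n % 3 = 1 then -2 else 1) := by
    split_ifs with h1 h2 <;> first | rfl | omega
  have hden : (3 + t) / 2 - (3 - t) / 2 = t := by ring
  rw [hexp, hdiv, hif, hden, div_eq_iff ht0]
  exact aux19 t ht n
end
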